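/- arXiv:1901.06745 — 4 statements merged into one kernel-verified Lean document; each statement's English description precedes it below -/
import Mathlib

section
/- If A and B are rings (with unity) and f : A → B is a map that is additive and multiplicative (but need not preserve the identity), then the map f^× : A^× → B^× defined by u ↦ 1_B + f(u - 1_A) is a group homomorphism from the unit group of A to the unit group of B. -/
/-- If `A` and `B` are rings (with unity) and `f : A → B` is additive and
multiplicative (a rng morphism, not necessarily unital), then `u ↦ 1 + f (u - 1)` defines a
group homomorphism from the unit group of `A` to the unit group of `B`. -/
theorem rng_morphism_units_hom {A B : Type*} [Ring A] [Ring B] (f : A → B)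
    (hadd : ∀ x y : A, f (x + y) = f x + f y)
    (hmul : ∀ x y : A, f (x * y) = f x * f y) :
    ∃ F : Aˣ →* Bˣ, ∀ u : Aˣ, (F u : B) = 1 + f ((u : A) - 1) := by
  have h0 : f 0 = 0 := by
    have h := hadd 0 0
    simp only [add_zero] at h
    exact (left_eq_add.mp h)
  have hsub : ∀ x : A, f (x - 1) = f x - f 1 := by
    intro x
    have h := hadd (x - 1) 1
    rw [sub_add_cancel] at h
    exact eq_sub_of_add_eq h.symm
  have he : f 1 * f 1 = f 1 := by rw [← hmul, one_mul]
  have hre : ∀ x : A, f x * f 1 = f x := by intro x; rw [← hmul, mul_one]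
  have hle : ∀ x : A, f 1 * f x = f x := by intro x; rw [← hmul, one_mul]
  have key : ∀ x y : A,
      (1 + f (x - 1)) * (1 + f (y - 1)) = 1 + f (x * y - 1) := by
    intro x y
    rw [hsub, hsub, hsub, hmul]
    have expand : (1 + (f x - f 1)) * (1 + (f y - f 1))
        = 1 + (f y - f 1) + (f x + f x * f y - f x * f 1)
          - (f 1 + f 1 * f y - f 1 * f 1) := by noncomm_ring
    rw [expand, hre, hle, he]
    abel
  have keyone : (1 : B) + f ((1 : A) - 1) = 1 := by
    rw [sub_self, h0, add_zero]
  refine ⟨{ toFun := fun u => ⟨1 + f ((u : A) - 1), 1 + f (((u⁻¹ : Aˣ) : A) - 1), ?_, ?_⟩,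
            map_one' := ?_, map_mul' := ?_ }, fun u => rfl⟩
  · rw [key, Units.mul_inv, keyone]
  · rw [key, Units.inv_mul, keyone]
  · exact Units.ext keyone
  · intro u v
    exact Units.ext (key _ _).symm
end

section
/- Let p be a prime and consider the system of quadratic equations in integers a₁,a₂,a₃,a₄: (p-1)a₁² + (a₁+a₂)² = 2a₁, (p-1)a₁² + (a₁+a₃)² = 2a₁, (p-1)a₃² + (a₃+a₄)² = 2a₄, (p-1)a₂² + (a₂+a₄)² = 2a₄, pa₁a₃ + a₁a₄ + a₂a₃ + a₂a₄ = a₂+a₃, and pa₁a₂ + a₂a₃ + a₁a₄ + a₃a₄ = a₂+a₃. If p > 3, then the only integer solutions are (0,0,0,0) and (0,0,0,2). -/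
/-- For a prime `p > 3`, the displayed system of quadratic equations in
integers `a₁, a₂, a₃, a₄` has only the solutions `(0,0,0,0)` and `(0,0,0,2)`. -/
theorem orthogonal_unit_system_p_gt_three (p : ℤ) (hp : Prime p) (hp3 : 3 < p)
    (a1 a2 a3 a4 : ℤ)
    (e1 : (p - 1) * a1 ^ 2 + (a1 + a2) ^ 2 = 2 * a1)
    (e2 : (p - 1) * a1 ^ 2 + (a1 + a3) ^ 2 = 2 * a1)
    (e3 : (p - 1) * a3 ^ 2 + (a3 + a4) ^ 2 = 2 * a4)
    (e4 : (p - 1) * a2 ^ 2 + (a2 + a4) ^ 2 = 2 * a4)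
    (e5 : p * a1 * a3 + a1 * a4 + a2 * a3 + a2 * a4 = a2 + a3)
    (e6 : p * a1 * a2 + a2 * a3 + a1 * a4 + a3 * a4 = a2 + a3) :
    (a1, a2, a3, a4) = (0, 0, 0, 0) ∨ (a1, a2, a3, a4) = (0, 0, 0, 2) := by
  have ha1 : a1 = 0 := by
    rcases lt_trichotomy a1 0 with h | h | h
    · exfalso
      have h' : a1 ≤ -1 := by omega
      nlinarith [sq_nonneg (a1 + a2), sq_nonneg a1]
    · exact h
    · exfalso
      have h' : 1 ≤ a1 := by omega
      nlinarith [sq_nonneg (a1 + a2), sq_nonneg a1]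
  subst ha1
  have ha2 : a2 = 0 := by nlinarith [sq_nonneg a2]
  have ha3 : a3 = 0 := by nlinarith [sq_nonneg a3]
  subst ha2; subst ha3
  have h4 : a4 * (a4 - 2) = 0 := by nlinarith
  rcases mul_eq_zero.1 h4 with h | h
  · left; simp [h]
  · right; have : a4 = 2 := by omega
    simp [this]
end

section
/- For p = 2, the system of integer equations a₁² + (a₁+a₂)² = 2a₁, a₁² + (a₁+a₃)² = 2a₁, a₃² + (a₃+a₄)² = 2a₄, a₂² + (a₂+a₄)² = 2a₄, 2a₁a₃ + a₁a₄ + a₂a₃ + a₂a₄ = a₂+a₃, 2a₁a₂ + a₂a₃ + a₁a₄ + a₃a₄ = a₂+a₃ has exactly eight integer solutions: (0,0,0,0), (0,0,0,2), (2,-2,-2,2), (2,-2,-2,4), (1,0,0,0), (1,-2,0,2), (1,0,-2,2), (1,-2,-2,4). -/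
lemma sq_le_two_bound (s : ℤ) (h : s ^ 2 ≤ 2) : -1 ≤ s ∧ s ≤ 1 := by
  constructor <;> nlinarith [sq_nonneg (s + 2), sq_nonneg (s - 2)]

set_option maxHeartbeats 2000000 in
/-- For `p = 2`, the displayed system of integer equations has exactly the
eight solutions listed (the kernel of `ρ^×` in `B_∘(C₂,C₂)`, a group isomorphic to `D₈`). -/
theorem orthogonal_unit_system_p_two (a1 a2 a3 a4 : ℤ) :
    (a1 ^ 2 + (a1 + a2) ^ 2 = 2 * a1 ∧
     a1 ^ 2 + (a1 + a3) ^ 2 = 2 * a1 ∧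
     a3 ^ 2 + (a3 + a4) ^ 2 = 2 * a4 ∧
     a2 ^ 2 + (a2 + a4) ^ 2 = 2 * a4 ∧
     2 * a1 * a3 + a1 * a4 + a2 * a3 + a2 * a4 = a2 + a3 ∧
     2 * a1 * a2 + a2 * a3 + a1 * a4 + a3 * a4 = a2 + a3) ↔
    ((a1, a2, a3, a4) = (0, 0, 0, 0) ∨ (a1, a2, a3, a4) = (0, 0, 0, 2) ∨
     (a1, a2, a3, a4) = (2, -2, -2, 2) ∨ (a1, a2, a3, a4) = (2, -2, -2, 4) ∨
     (a1, a2, a3, a4) = (1, 0, 0, 0) ∨ (a1, a2, a3, a4) = (1, -2, 0, 2) ∨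
     (a1, a2, a3, a4) = (1, 0, -2, 2) ∨ (a1, a2, a3, a4) = (1, -2, -2, 4)) := by
  constructor
  · rintro ⟨e1, e2, e3, e4, e5, e6⟩
    have h1 : (a1 - 1) ^ 2 + (a1 + a2) ^ 2 = 1 := by linear_combination e1
    have h3 : (a3 + 1) ^ 2 + (a3 + a4 - 1) ^ 2 = 2 := by linear_combination e3
    have h4 : (a2 + 1) ^ 2 + (a2 + a4 - 1) ^ 2 = 2 := by linear_combination e4
    have c1 := sq_le_two_bound (a1 - 1) (by nlinarith [sq_nonneg (a1 + a2)])
    have c2 := sq_le_two_bound (a2 + 1) (by nlinarith [sq_nonneg (a2 + a4 - 1)])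
    have c3 := sq_le_two_bound (a3 + 1) (by nlinarith [sq_nonneg (a3 + a4 - 1)])
    have c4 := sq_le_two_bound (a3 + a4 - 1) (by nlinarith [sq_nonneg (a3 + 1)])
    obtain ⟨c1l, c1u⟩ := c1
    obtain ⟨c2l, c2u⟩ := c2
    obtain ⟨c3l, c3u⟩ := c3
    obtain ⟨c4l, c4u⟩ := c4
    have b1l : 0 ≤ a1 := by linarith
    have b1u : a1 ≤ 2 := by linarith
    have b2l : -2 ≤ a2 := by linarith
    have b2u : a2 ≤ 0 := by linarith
    have b3l : -2 ≤ a3 := by linarith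
    have b3u : a3 ≤ 0 := by linarith
    have b4l : 0 ≤ a4 := by linarith
    have b4u : a4 ≤ 4 := by linarith
    clear h1 h3 h4 c1l c1u c2l c2u c3l c3u c4l c4u
    interval_cases a1 <;> interval_cases a2 <;> interval_cases a3 <;>
      interval_cases a4 <;> simp_all
  · rintro (h | h | h | h | h | h | h | h) <;>
      · rw [Prod.ext_iff, Prod.ext_iff, Prod.ext_iff] at h
        obtain ⟨h1, h2, h3, h4⟩ := h
        subst h1; subst h2; subst h3; subst h4; norm_num
end

section
/- Let n ≥ 1, p prime, and suppose nonnegative-indexed integers a₀,…,aₙ satisfy (∑_{k=0}^n a_k)² + ∑_{i=0}^{n-1} (p^{n-i} - p^{n-1-i}) (∑_{j=0}^i a_j)² = 2a₀ with p^n - p^{n-1} > 2. Then a₀ = a₁ = ⋯ = aₙ = 0. -/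
/-- Let `n ≥ 1`, `p` prime, and suppose integers `a₀, …, aₙ` satisfy
`(∑_{k=0}^n a_k)² + ∑_{i=0}^{n-1} (p^{n-i} - p^{n-1-i}) (∑_{j=0}^i a_j)² = 2 a₀`
with `p^n - p^{n-1} > 2`. Then `a₀ = a₁ = ⋯ = aₙ = 0`. -/
theorem quadratic_form_estimate (n : ℕ) (hn : 1 ≤ n) (p : ℕ) (hp : p.Prime) (a : ℕ → ℤ)
    (hbig : 2 < (p : ℤ) ^ n - (p : ℤ) ^ (n - 1))
    (heq : (∑ k ∈ Finset.range (n + 1), a k) ^ 2 +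
        ∑ i ∈ Finset.range n,
          ((p : ℤ) ^ (n - i) - (p : ℤ) ^ (n - 1 - i)) * (∑ j ∈ Finset.range (i + 1), a j) ^ 2 =
      2 * a 0) :
    ∀ k ≤ n, a k = 0 := by
  have hp2 : (2:ℤ) ≤ (p:ℤ) := by exact_mod_cast hp.two_le
  have hcoe : ∀ i < n, 0 < (p:ℤ)^(n-i) - (p:ℤ)^(n-1-i) := by
    intro i hi
    have h1 : n-1-i < n-i := by omega
    have := pow_lt_pow_right₀ (by linarith : (1:ℤ) < (p:ℤ)) h1
    linarith
  have hterm : ∀ i ∈ Finset.range n,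
      0 ≤ ((p:ℤ)^(n-i) - (p:ℤ)^(n-1-i)) * (∑ j ∈ Finset.range (i+1), a j)^2 := by
    intro i hi
    exact mul_nonneg (le_of_lt (hcoe i (Finset.mem_range.mp hi))) (sq_nonneg _)
  have hmem0 : 0 ∈ Finset.range n := Finset.mem_range.mpr hn
  have hsingle := Finset.single_le_sum hterm hmem0
  have hS0 : (∑ j ∈ Finset.range (0+1), a j) = a 0 := by simp
  rw [hS0] at hsingle
  have hsq : 0 ≤ (∑ k ∈ Finset.range (n+1), a k)^2 := sq_nonneg _
  have h2 : ((p:ℤ)^n - (p:ℤ)^(n-1)) * (a 0)^2 ≤ 2 * a 0 := by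
    simpa using le_trans hsingle (by linarith)
  have ha0 : a 0 = 0 := by
    rcases le_or_gt (a 0) 0 with h | h
    · have : (a 0)^2 ≤ 0 := by nlinarith
      nlinarith [sq_nonneg (a 0)]
    · nlinarith [sq_nonneg (a 0 - 1)]
  -- now both big parts are zero
  have hsum_nonneg : 0 ≤ ∑ i ∈ Finset.range n,
      ((p:ℤ)^(n-i) - (p:ℤ)^(n-1-i)) * (∑ j ∈ Finset.range (i+1), a j)^2 :=
    Finset.sum_nonneg hterm
  have hA : (∑ k ∈ Finset.range (n+1), a k)^2 = 0 := by
    rw [ha0] at heq; linarith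
  have hB : ∑ i ∈ Finset.range n,
      ((p:ℤ)^(n-i) - (p:ℤ)^(n-1-i)) * (∑ j ∈ Finset.range (i+1), a j)^2 = 0 := by
    rw [ha0] at heq; linarith
  have hEach := (Finset.sum_eq_zero_iff_of_nonneg hterm).mp hB
  have hpart : ∀ i ≤ n, (∑ j ∈ Finset.range (i+1), a j) = 0 := by
    intro i hi
    rcases eq_or_lt_of_le hi with rfl | hi'
    · exact pow_eq_zero_iff (by norm_num) |>.mp hA
    · have := hEach i (Finset.mem_range.mpr hi')
      have hc := hcoe i hi'
      have := mul_eq_zero.mp this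
      rcases this with h | h
      · exact absurd h (ne_of_gt hc)
      · exact pow_eq_zero_iff (by norm_num) |>.mp h
  intro k hk
  cases k with
  | zero => exact ha0
  | succ m =>
    have h1 := hpart (m+1) hk
    have h2 := hpart m (by omega)
    rw [Finset.sum_range_succ] at h1
    linarith
end
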